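/- arXiv:1312.3009 — 5 statements merged into one kernel-verified Lean document; each statement's English description precedes it below -/
import Mathlib

section
/- Let n ≥ 1 and let G be a subgroup of the hyperoctahedral group H_n. Then G equals all of H_n if and only if G surjects onto S_n under the natural block projection π and G contains a transposition. -/
/-- The fixed-point-free involution `ι : (i, b) ↦ (i, ¬b)` on `Fin n × Bool`. -/
def hyperoctahedralInvolution (n : ℕ) : Equiv.Perm (Fin n × Bool) :=
  Function.Involutive.toPerm (fun x => (x.1, !x.2)) (fun x => by simp)

/-- The hyperoctahedral group `H_n = C₂ ≀ Sₙ`, modelled as the subgroup of the symmetric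
group on `Fin n × Bool` consisting of all permutations commuting with `ι`. -/
def hyperoctahedralGroup (n : ℕ) : Subgroup (Equiv.Perm (Fin n × Bool)) :=
  Subgroup.centralizer {hyperoctahedralInvolution n}

/-!
Let `G ≤ H_n` surject onto `Sₙ` and contain a transposition `τ`. Since `τ` commutes with `ι`,
it must swap the two points of one block. Conjugating by elements of `G` over suitable
permutations of blocks puts every block swap in `G`. The block swaps generate the kernel of
the block projection `π`, so `G` contains `ker π` and meets every coset of it, whence `G = H_n`.
-/

open Equiv

section BlockSwap

variable {α : Type*} [DecidableEq α]

def blockSwap (i : α) : Perm (α × Bool) := swap (i, false) (i, true)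

lemma swap_not_eq_blockSwap (x : α × Bool) : swap x (x.1, !x.2) = blockSwap x.1 := by
  obtain ⟨i, _ | _⟩ := x
  · rfl
  · exact swap_comm _ _

@[simp]
lemma fst_blockSwap_apply (i : α) (x : α × Bool) : (blockSwap i x).1 = x.1 := by
  obtain ⟨j, b⟩ := x
  by_cases hj : j = i
  · subst hj
    cases b <;> simp [blockSwap]
  · simp [blockSwap, swap_apply_of_ne_of_ne, hj]

lemma blockSwap_apply_of_ne {i j : α} (h : j ≠ i) (b : Bool) : blockSwap i (j, b) = (j, b) :=
  swap_apply_of_ne_of_ne (by simp [h]) (by simp [h])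

lemma mem_of_forall_fst_apply_eq [Fintype α] {G : Subgroup (Perm (α × Bool))}
    (hG : ∀ i, blockSwap i ∈ G) {d : Perm (α × Bool)} (hd : ∀ x, (d x).1 = x.1) : d ∈ G := by
  suffices ∀ s : Finset α, ∀ d : Perm (α × Bool), (∀ x, (d x).1 = x.1) →
      (∀ i ∉ s, d (i, false) = (i, false)) → d ∈ G from
    this Finset.univ d hd (by simp)
  intro s
  induction s using Finset.induction_on with
  | empty =>
    intro d hd hfix
    suffices d = 1 by rw [this]; exact one_mem G
    ext1 ⟨i, b⟩
    have hi := hfix i (Finset.notMem_empty i)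
    cases b
    · exact hi
    · refine Prod.ext (hd _) ?_
      by_contra hb
      have : d (i, true) = d (i, false) := by
        rw [hi]; exact Prod.ext (hd _) (by simpa using hb)
      simpa using d.injective this
  | @insert a s _ ih =>
    intro d hd hfix
    obtain ⟨c, hc⟩ : ∃ c, d (a, false) = (a, c) := ⟨(d (a, false)).2, Prod.ext (hd _) rfl⟩
    cases c
    · refine ih d hd fun i hi => ?_
      by_cases hia : i = a
      · exact hia ▸ hc
      · exact hfix i (by simp [hia, hi])
    · have hmem : blockSwap a * d ∈ G := by
        refine ih _ (fun x => by simp [hd]) fun i hi => ?_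
        by_cases hia : i = a
        · subst hia
          simp [hc, blockSwap]
        · simp [hfix i (by simp [hia, hi]), blockSwap_apply_of_ne hia]
      simpa [← mul_assoc, blockSwap] using mul_mem (hG a) hmem

end BlockSwap

section Hyperoctahedral

variable {n : ℕ}

@[simp]
lemma hyperoctahedralInvolution_apply (x : Fin n × Bool) :
    hyperoctahedralInvolution n x = (x.1, !x.2) := rfl

lemma mem_hyperoctahedralGroup_iff {σ : Perm (Fin n × Bool)} :
    σ ∈ hyperoctahedralGroup n ↔ ∀ x : Fin n × Bool, σ (x.1, !x.2) = ((σ x).1, !(σ x).2) := by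
  simp only [hyperoctahedralGroup, Subgroup.mem_centralizer_singleton_iff, Perm.ext_iff,
    Perm.mul_apply, hyperoctahedralInvolution_apply]

lemma fst_apply_eq_of_mem_hyperoctahedralGroup {σ : Perm (Fin n × Bool)}
    (hσ : σ ∈ hyperoctahedralGroup n) (x : Fin n × Bool) : (σ x).1 = (σ (x.1, false)).1 := by
  obtain ⟨i, _ | _⟩ := x
  · rfl
  · have hcomm := mem_hyperoctahedralGroup_iff.mp hσ (i, false)
    rw [Bool.not_false] at hcomm
    rw [hcomm]

lemma blockSwap_mem_hyperoctahedralGroup (i : Fin n) : blockSwap i ∈ hyperoctahedralGroup n := by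
  refine mem_hyperoctahedralGroup_iff.mpr fun ⟨j, b⟩ => ?_
  by_cases hj : j = i
  · subst hj
    cases b <;> simp [blockSwap]
  · simp [blockSwap_apply_of_ne hj]

lemma mul_blockSwap_mul_inv {σ : Perm (Fin n × Bool)} (hσ : σ ∈ hyperoctahedralGroup n)
    (i : Fin n) : σ * blockSwap i * σ⁻¹ = blockSwap (σ (i, false)).1 := by
  rw [blockSwap, ← swap_apply_apply, ← Bool.not_false,
    mem_hyperoctahedralGroup_iff.mp hσ (i, false), swap_not_eq_blockSwap]

lemma exists_eq_blockSwap_of_isSwap {τ : Perm (Fin n × Bool)}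
    (hτ : τ ∈ hyperoctahedralGroup n) (hswap : τ.IsSwap) : ∃ i, τ = blockSwap i := by
  obtain ⟨x, y, hxy, rfl⟩ := hswap
  refine ⟨x.1, ?_⟩
  suffices y = (x.1, !x.2) by rw [this, swap_not_eq_blockSwap]
  by_contra hy
  -- `swap x y` would fix `ι x` while moving `x`, contradicting that it commutes with `ι`.
  have hfix : swap x y (x.1, !x.2) = (x.1, !x.2) :=
    swap_apply_of_ne_of_ne (by simp [Prod.ext_iff]) (Ne.symm hy)
  have hcomm := mem_hyperoctahedralGroup_iff.mp hτ x
  rw [hfix, swap_apply_left, Prod.mk.injEq, Bool.not_inj_iff] at hcomm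
  exact hxy (Prod.ext hcomm.1 hcomm.2)

/-- The block projection `π : H_n → Sₙ`. -/
def blockPerm : hyperoctahedralGroup n →* Perm (Fin n) where
  toFun σ :=
    { toFun := fun i => ((σ : Perm (Fin n × Bool)) (i, false)).1
      invFun := fun i => ((σ : Perm (Fin n × Bool))⁻¹ (i, false)).1
      left_inv := fun i => by
        simp only
        rw [← fst_apply_eq_of_mem_hyperoctahedralGroup (inv_mem σ.2)]
        simp
      right_inv := fun i => by
        simp only
        rw [← fst_apply_eq_of_mem_hyperoctahedralGroup σ.2]
        simp }
  map_one' := rfl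
  map_mul' σ τ := Perm.ext fun i =>
    fst_apply_eq_of_mem_hyperoctahedralGroup σ.2 ((τ : Perm (Fin n × Bool)) (i, false))

lemma blockPerm_apply (σ : hyperoctahedralGroup n) (i : Fin n) :
    blockPerm σ i = ((σ : Perm (Fin n × Bool)) (i, false)).1 := rfl

lemma mem_of_blockPerm_eq_one {G : Subgroup (Perm (Fin n × Bool))}
    (hG : ∀ i, blockSwap i ∈ G) {d : hyperoctahedralGroup n} (hd : blockPerm d = 1) :
    (d : Perm (Fin n × Bool)) ∈ G := by
  refine mem_of_forall_fst_apply_eq hG fun x => ?_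
  rw [fst_apply_eq_of_mem_hyperoctahedralGroup d.2, ← blockPerm_apply, hd, Perm.one_apply]

lemma hyperoctahedralGroup_le_of_blockSwap_mem {G : Subgroup (Perm (Fin n × Bool))}
    (hGH : G ≤ hyperoctahedralGroup n) (hG : ∀ i, blockSwap i ∈ G)
    (hsurj : ∀ p : Perm (Fin n), ∃ σ ∈ G, ∀ i, (σ (i, false)).1 = p i) :
    hyperoctahedralGroup n ≤ G := by
  intro h hh
  obtain ⟨σ, hσG, hσ⟩ := hsurj (blockPerm ⟨h, hh⟩)
  have hker : blockPerm (⟨σ, hGH hσG⟩⁻¹ * ⟨h, hh⟩) = 1 := by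
    rw [map_mul, map_inv, inv_mul_eq_one]
    exact Perm.ext hσ
  simpa using mul_mem hσG (mem_of_blockPerm_eq_one hG hker)

end Hyperoctahedral

/-- A subgroup `G` of the hyperoctahedral group `H_n` equals all of `H_n` if and only if
`G` surjects onto `Sₙ` under the natural block projection and `G` contains a
transposition. -/
theorem subgroup_eq_hyperoctahedral_iff (n : ℕ) (hn : 1 ≤ n)
    (G : Subgroup (Equiv.Perm (Fin n × Bool))) (hG : G ≤ hyperoctahedralGroup n) :
    G = hyperoctahedralGroup n ↔
      ((∀ p : Equiv.Perm (Fin n), ∃ σ ∈ G, ∀ i : Fin n, (σ (i, false)).1 = p i) ∧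
        ∃ τ ∈ G, τ.IsSwap) := by
  constructor
  · rintro rfl
    exact ⟨fun p => ⟨p.prodCongr (Equiv.refl Bool),
      mem_hyperoctahedralGroup_iff.mpr fun _ => rfl, fun _ => rfl⟩,
      blockSwap ⟨0, hn⟩, blockSwap_mem_hyperoctahedralGroup _, _, _, by simp, rfl⟩
  · rintro ⟨hsurj, τ, hτG, hswap⟩
    obtain ⟨i, rfl⟩ := exists_eq_blockSwap_of_isSwap (hG hτG) hswap
    have hblockSwaps : ∀ j, blockSwap j ∈ G := fun j => by
      obtain ⟨σ, hσG, hσ⟩ := hsurj (swap i j)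
      have hconj := mul_blockSwap_mul_inv (hG hσG) i
      rw [hσ, swap_apply_left] at hconj
      exact hconj ▸ mul_mem (mul_mem hσG hτG) (inv_mem hσG)
    exact le_antisymm hG (hyperoctahedralGroup_le_of_blockSwap_mem hG hblockSwaps hsurj)
end

section
/- Let σ be a permutation of a finite type whose cycle type is 2 ::ₘ t, where every element of the multiset t is odd. Then σ raised to the power t.prod (the product of the elements of t) is a transposition. -/
/-! Split `σ = c * τ` with `c` a transposition disjoint from `τ`, so that `τ` has cycle type `t`.
Every cycle length of `τ` divides `t.prod`, hence `τ ^ t.prod = 1`, while `t.prod` is odd and `c`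
has order two, hence `c ^ t.prod = c`. -/

theorem Multiset.odd_prod {t : Multiset ℕ} (ht : ∀ x ∈ t, Odd x) : Odd t.prod :=
  t.prod_induction Odd (fun _ _ => Odd.mul) odd_one ht

theorem pow_eq_self_of_orderOf_eq_two {G : Type*} [Monoid G] {x : G} (hx : orderOf x = 2)
    {n : ℕ} (hn : Odd n) : x ^ n = x := by
  rw [← pow_mod_orderOf, hx, Nat.odd_iff.1 hn, pow_one]

theorem Equiv.Perm.pow_prod_cycleType {α : Type*} [Fintype α] [DecidableEq α]
    (σ : Equiv.Perm α) : σ ^ σ.cycleType.prod = 1 := by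
  rw [← orderOf_dvd_iff_pow_eq_one, ← lcm_cycleType]
  exact Multiset.lcm_dvd.2 fun _ => Multiset.dvd_prod

/-- If the cycle type of a permutation `σ` is `2 ::ₘ t` with every element of `t` odd,
then `σ` raised to the power `t.prod` is a transposition. -/
theorem pow_prod_isSwap {α : Type*} [Fintype α] [DecidableEq α]
    (σ : Equiv.Perm α) (t : Multiset ℕ) (hct : σ.cycleType = 2 ::ₘ t)
    (ht : ∀ x ∈ t, Odd x) :
    (σ ^ t.prod).IsSwap := by
  obtain ⟨c, τ, rfl, hd, -, hc2⟩ :=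
    Equiv.Perm.mem_cycleType_iff.1 (hct ▸ Multiset.mem_cons_self 2 t)
  have hc : c.IsSwap := Equiv.Perm.card_support_eq_two.1 hc2
  have hτ : τ.cycleType = t := by
    rw [hd.cycleType_mul, Equiv.Perm.isSwap_iff_cycleType.1 hc, Multiset.singleton_add] at hct
    exact (Multiset.cons_inj_right 2).1 hct
  rw [hd.commute.mul_pow, pow_eq_self_of_orderOf_eq_two hc.orderOf (Multiset.odd_prod ht), ← hτ,
    τ.pow_prod_cycleType, mul_one]
  exact hc
end

section
/- Let n ≥ 2, and let o_m denote the number of permutations of a set with m elements that have odd order. Then the number of permutations σ ∈ S_n whose cycle type is 2 ::ₘ t with every element of the multiset t odd (exactly one transposition, all other nontrivial cycles of odd length) equals (n(n−1)/2) · o_{n−2}. -/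
/-!
A permutation whose cycle type is `2 ::ₘ t` with `t` odd factors uniquely as `τ * ρ` with `τ` a
transposition and `ρ` an odd-order permutation disjoint from `τ`: `τ` is its unique 2-cycle, and
is recovered as `(τ * ρ) ^ k` for any odd `k` with `ρ ^ k = 1`. For a fixed `τ`, the admissible
`ρ` are the odd-order permutations of the `n - 2` points fixed by `τ`, and there are
`n.choose 2 = n * (n - 1) / 2` transpositions.
-/

/-- `oddOrderCount m` is the number of permutations of an `m`-element set that have odd
order (equivalently, all of whose cycle lengths are odd). -/
noncomputable def oddOrderCount (m : ℕ) : ℕ :=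
  Nat.card {σ : Equiv.Perm (Fin m) // Odd (orderOf σ)}

open Equiv Equiv.Perm Finset

theorem Multiset.odd_lcm {s : Multiset ℕ} (hs : ∀ k ∈ s, Odd k) : Odd s.lcm := by
  induction s using Multiset.induction with
  | empty => simp
  | cons a s ih =>
    rw [Multiset.forall_mem_cons] at hs
    rw [Multiset.lcm_cons]
    exact (hs.1.mul (ih hs.2)).of_dvd_nat (lcm_dvd_mul _ _)

theorem natCard_oddOrder (β : Type*) [Finite β] :
    Nat.card {σ : Perm β // Odd (orderOf σ)} = oddOrderCount (Nat.card β) :=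
  Nat.card_congr <| (Finite.equivFin β).permCongrHom.toEquiv.subtypeEquiv fun σ => by
    rw [MulEquiv.toEquiv_eq_coe, MulEquiv.coe_toEquiv, MulEquiv.orderOf_eq]

namespace Equiv.Perm

variable {α : Type*} [DecidableEq α]

theorem IsSwap.pow_of_odd {τ : Perm α} (hτ : τ.IsSwap) {k : ℕ} (hk : Odd k) : τ ^ k = τ := by
  obtain ⟨x, y, -, rfl⟩ := hτ
  obtain ⟨m, rfl⟩ := hk
  rw [pow_succ, pow_mul, sq, swap_mul_self, one_pow, one_mul]

theorem mul_pow_eq_of_isSwap {τ ρ : Perm α} (hτ : τ.IsSwap) (hd : τ.Disjoint ρ) {k : ℕ}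
    (hk : Odd k) (hρ : orderOf ρ ∣ k) : (τ * ρ) ^ k = τ := by
  rw [hd.commute.mul_pow, orderOf_dvd_iff_pow_eq_one.mp hρ, mul_one, hτ.pow_of_odd hk]

theorem eq_of_isSwap_mul_eq_mul {τ₁ τ₂ ρ₁ ρ₂ : Perm α} (hτ₁ : τ₁.IsSwap) (hτ₂ : τ₂.IsSwap)
    (hd₁ : τ₁.Disjoint ρ₁) (hd₂ : τ₂.Disjoint ρ₂) (hρ₁ : Odd (orderOf ρ₁))
    (hρ₂ : Odd (orderOf ρ₂)) (h : τ₁ * ρ₁ = τ₂ * ρ₂) : τ₁ = τ₂ := by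
  have hk := hρ₁.mul hρ₂
  rw [← mul_pow_eq_of_isSwap hτ₁ hd₁ hk (dvd_mul_right _ _), h,
    mul_pow_eq_of_isSwap hτ₂ hd₂ hk (dvd_mul_left _ _)]

variable [Fintype α]

theorem odd_orderOf_iff {σ : Perm α} : Odd (orderOf σ) ↔ ∀ k ∈ σ.cycleType, Odd k :=
  ⟨fun h _ hk => h.of_dvd_nat (dvd_of_mem_cycleType hk),
    fun h => lcm_cycleType σ ▸ Multiset.odd_lcm h⟩

theorem IsSwap.cycleType_mul {τ ρ : Perm α} (hτ : τ.IsSwap) (hd : τ.Disjoint ρ) :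
    (τ * ρ).cycleType = 2 ::ₘ ρ.cycleType := by
  rw [hd.cycleType_mul, isSwap_iff_cycleType.mp hτ, Multiset.singleton_add]

theorem exists_isSwap_mul_eq_of_cycleType_eq_cons {σ : Perm α} {t : Multiset ℕ}
    (ht : σ.cycleType = 2 ::ₘ t) :
    ∃ τ ρ : Perm α, τ.IsSwap ∧ τ.Disjoint ρ ∧ ρ.cycleType = t ∧ τ * ρ = σ := by
  have h2 : 2 ∈ σ.cycleType := ht ▸ Multiset.mem_cons_self 2 t
  obtain ⟨c, hc, hc2⟩ := Multiset.mem_map.mp (cycleType_def σ ▸ h2)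
  have hswap : c.IsSwap := card_support_eq_two.mp hc2
  have hdisj := disjoint_mul_inv_of_mem_cycleFactorsFinset hc
  refine ⟨c, σ * c⁻¹, hswap, hdisj.symm, ?_, ?_⟩
  · rw [cycleType_mul_inv_mem_cycleFactorsFinset_eq_sub hc, isSwap_iff_cycleType.mp hswap, ht,
      ← Multiset.singleton_add, add_tsub_cancel_left]
  · rw [← hdisj.commute.eq, inv_mul_cancel_right]

def oddOrderPermComplSupportEquiv (τ : Perm α) :
    {ρ : Perm {x // x ∉ τ.support} // Odd (orderOf ρ)} ≃
      {ρ : Perm α // Odd (orderOf ρ) ∧ τ.Disjoint ρ} :=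
  ((Perm.subtypeEquivSubtypePerm _).subtypeEquiv (q := fun ρ => Odd (orderOf ρ.1)) fun ρ => by
      rw [Perm.subtypeEquivSubtypePerm_apply_coe, orderOf_injective _ ofSubtype_injective]).trans <|
    (subtypeSubtypeEquivSubtypeInter _ fun ρ => Odd (orderOf ρ)).trans <|
      subtypeEquivRight fun ρ => by simp [Disjoint, or_iff_not_imp_left, and_comm]

theorem natCard_oddOrder_disjoint (τ : Perm α) :
    Nat.card {ρ : Perm α // Odd (orderOf ρ) ∧ τ.Disjoint ρ} =
      oddOrderCount (Fintype.card α - #τ.support) := by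
  rw [← Nat.card_congr (oddOrderPermComplSupportEquiv τ), natCard_oddOrder,
    Nat.card_eq_fintype_card, Fintype.card_subtype_compl, Fintype.card_coe]

theorem natCard_isSwap (h : 2 ≤ Fintype.card α) :
    Nat.card {τ : Perm α // τ.IsSwap} = (Fintype.card α).choose 2 := by
  classical
  rw [Nat.card_eq_fintype_card, Fintype.card_subtype]
  simpa [isSwap_iff_cycleType] using card_of_cycleType_singleton le_rfl h

noncomputable def swapMulEquiv :
    (Σ τ : {τ : Perm α // τ.IsSwap}, {ρ : Perm α // Odd (orderOf ρ) ∧ τ.1.Disjoint ρ}) ≃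
      {σ : Perm α // ∃ t : Multiset ℕ, σ.cycleType = 2 ::ₘ t ∧ ∀ k ∈ t, Odd k} :=
  Equiv.ofBijective
    (fun p => ⟨p.1.1 * p.2.1, p.2.1.cycleType, p.1.2.cycleType_mul p.2.2.2,
      odd_orderOf_iff.mp p.2.2.1⟩)
    ⟨by
      rintro ⟨⟨τ₁, hτ₁⟩, ρ₁, hρ₁, hd₁⟩ ⟨⟨τ₂, hτ₂⟩, ρ₂, hρ₂, hd₂⟩ h
      have hmul : τ₁ * ρ₁ = τ₂ * ρ₂ := congrArg Subtype.val h
      obtain rfl := eq_of_isSwap_mul_eq_mul hτ₁ hτ₂ hd₁ hd₂ hρ₁ hρ₂ hmul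
      obtain rfl := mul_left_cancel hmul
      rfl,
    by
      rintro ⟨σ, t, ht, hodd⟩
      obtain ⟨τ, ρ, hτ, hd, rfl, rfl⟩ := exists_isSwap_mul_eq_of_cycleType_eq_cons ht
      exact ⟨⟨⟨τ, hτ⟩, ρ, odd_orderOf_iff.mpr hodd, hd⟩, rfl⟩⟩

end Equiv.Perm

/-- For `n ≥ 2`, the number of permutations in `Sₙ` with exactly one transposition and
all other nontrivial cycles of odd length equals `(n(n-1)/2) · o_{n-2}`. -/
theorem count_one_transposition_rest_odd (n : ℕ) (hn : 2 ≤ n) :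
    Nat.card {σ : Equiv.Perm (Fin n) //
        ∃ t : Multiset ℕ, σ.cycleType = 2 ::ₘ t ∧ ∀ x ∈ t, Odd x}
      = n * (n - 1) / 2 * oddOrderCount (n - 2) := by
  classical
  calc _ = ∑ τ : {τ : Perm (Fin n) // τ.IsSwap},
        Nat.card {ρ : Perm (Fin n) // Odd (orderOf ρ) ∧ τ.1.Disjoint ρ} := by
        rw [← Nat.card_congr swapMulEquiv, Nat.card_sigma]
    _ = ∑ _τ : {τ : Perm (Fin n) // τ.IsSwap}, oddOrderCount (n - 2) :=
        Finset.sum_congr rfl fun τ _ => by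
          rw [natCard_oddOrder_disjoint, card_support_eq_two.mpr τ.2, Fintype.card_fin]
    _ = n * (n - 1) / 2 * oddOrderCount (n - 2) := by
        rw [Finset.sum_const, Finset.card_univ, ← Nat.card_eq_fintype_card,
          natCard_isSwap (by simpa using hn), smul_eq_mul, Fintype.card_fin, Nat.choose_two_right]
end

section
/- Let f ∈ ℚ[X] be monic and squarefree of degree n, with roots r_1, …, r_n (all distinct) in a splitting field, and let 1 ≤ k ≤ n. If the k-subset-sum polynomial χ_k(f) := ∏_{S ⊆ {1,…,n}, |S| = k} (X − ∑_{i ∈ S} r_i), which has rational coefficients, is irreducible over ℚ, then the Galois group of f acts transitively on the k-element subsets of the set of roots of f, i.e., the Galois group of f is k-homogeneous. -/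
open Polynomial

attribute [local instance] Classical.propDecidable

instance (f : ℚ[X]) : Fact ((f.map (algebraMap ℚ f.SplittingField)).Splits) :=
  ⟨SplittingField.splits f⟩

/-- The `k`-subset-sum polynomial `χ_k(f) = ∏_{S ⊆ {1,…,n}, |S| = k} (X - ∑_{i ∈ S} rᵢ)`
built from the roots `r` of `f`. -/
noncomputable def subsetSumPoly {n : ℕ} {K : Type*} [Field K] (r : Fin n → K) (k : ℕ) :
    K[X] :=
  ∏ S ∈ (Finset.univ : Finset (Fin n)).powersetCard k, (X - C (∑ i ∈ S, r i))

/-! The sum map `u ↦ ∑ u` identifies the `k`-subsets of roots of `f` with the roots of `χ_k(f)`;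
irreducibility of `χ_k(f)` makes these roots simple, so the map is injective on `k`-subsets, and
makes them Galois conjugate. A Galois automorphism sending `∑ s` to `∑ t` therefore sends `s`
to `t`. -/

open Finset

namespace Polynomial

theorem rootSet_eq_range_of_map_eq_prod {K L ι : Type*} [Field K] [Field L] [Algebra K L]
    [Fintype ι] {f : K[X]} {r : ι → L} (hf : f.map (algebraMap K L) = ∏ i, (X - C (r i))) :
    f.rootSet L = Set.range r := by
  ext a
  have hne : ∏ i, (X - C (r i)) ≠ 0 :=
    (monic_prod_of_monic _ _ fun i _ => monic_X_sub_C (r i)).ne_zero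
  rw [mem_rootSet', aeval_def, ← eval_map, hf, eval_prod, prod_eq_zero_iff, Set.mem_range]
  simp [hne, sub_eq_zero, eq_comm]

theorem aeval_eq_zero_of_map_eq_prod {K L ι : Type*} [Field K] [Field L] [Algebra K L]
    {g : K[X]} {s : Finset ι} {φ : ι → L} (hg : g.map (algebraMap K L) = ∏ i ∈ s, (X - C (φ i)))
    {i : ι} (hi : i ∈ s) : aeval (φ i) g = 0 := by
  rw [aeval_def, ← eval_map, hg, eval_prod]
  exact prod_eq_zero hi (by simp)

theorem exists_algEquiv_apply_eq_of_irreducible {K L : Type*} [Field K] [Field L] [Algebra K L]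
    [Normal K L] {g : K[X]} (hg : Irreducible g) {a b : L} (ha : aeval a g = 0)
    (hb : aeval b g = 0) : ∃ σ : L ≃ₐ[K] L, σ a = b := by
  refine minpoly.exists_algEquiv_of_root ⟨g, hg.ne_zero, hb⟩ ?_
  rw [← minpoly.eq_of_irreducible hg hb, map_mul, ha, zero_mul]

theorem Gal.sum_map_galActionHom_restrict {F E : Type*} [Field F] [Field E] [Algebra F E]
    {p : F[X]} [Fact ((p.map (algebraMap F E)).Splits)] (σ : E ≃ₐ[F] E)
    (s : Finset (p.rootSet E)) :
    ∑ x ∈ s.map (Gal.galActionHom p E (Gal.restrict p E σ)).toEmbedding, (x : E) =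
      σ (∑ x ∈ s, (x : E)) := by
  rw [sum_map, map_sum]
  exact sum_congr rfl fun x _ => Gal.galActionHom_restrict p E σ x

end Polynomial

theorem subsetSumPoly_comp_equiv {n : ℕ} {K α : Type*} [Field K] [Fintype α] (e : Fin n ≃ α)
    (v : α → K) (k : ℕ) :
    subsetSumPoly (v ∘ e) k = ∏ u ∈ (univ : Finset α).powersetCard k, (X - C (∑ x ∈ u, v x)) := by
  rw [← map_univ_equiv e, powersetCard_map, prod_map, subsetSumPoly]
  simp [sum_map]

theorem gal_k_homogeneous_of_subsetSumPoly_irreducible_general (n k : ℕ)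
    (f : ℚ[X])
    (r : Fin n → f.SplittingField) (hinj : Function.Injective r)
    (hroots : f.map (algebraMap ℚ f.SplittingField) = ∏ i : Fin n, (X - C (r i)))
    (g : ℚ[X]) (hg : g.map (algebraMap ℚ f.SplittingField) = subsetSumPoly r k)
    (hirr : Irreducible g)
    (s t : Finset (f.rootSet f.SplittingField)) (hs : s.card = k) (ht : t.card = k) :
    ∃ φ : f.Gal,
      s.map (Polynomial.Gal.galActionHom f f.SplittingField φ).toEmbedding = t := by
  let e : Fin n ≃ f.rootSet f.SplittingField := (Equiv.ofInjective r hinj).trans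
    (Equiv.setCongr (rootSet_eq_range_of_map_eq_prod hroots).symm)
  have hχ : g.map (algebraMap ℚ f.SplittingField) =
      ∏ u ∈ (univ : Finset (f.rootSet f.SplittingField)).powersetCard k,
        (X - C (∑ x ∈ u, (x : f.SplittingField))) :=
    hg.trans (subsetSumPoly_comp_equiv e Subtype.val k)
  have hsum_inj := separable_prod_X_sub_C_iff'.mp (hχ ▸ hirr.separable.map)
  -- The `Algebra ℚ` instance here is `DivisionRing.toRatAlgebra`, not the one of `SplittingField`.
  have : Normal ℚ f.SplittingField := SplittingField.instNormal f
  obtain ⟨σ, hσ⟩ := exists_algEquiv_apply_eq_of_irreducible hirr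
    (aeval_eq_zero_of_map_eq_prod hχ (mem_powersetCard_univ.2 hs))
    (aeval_eq_zero_of_map_eq_prod hχ (mem_powersetCard_univ.2 ht))
  refine ⟨Gal.restrict f f.SplittingField σ, hsum_inj _ (mem_powersetCard_univ.2 ?_) _
    (mem_powersetCard_univ.2 ht) ((Gal.sum_map_galActionHom_restrict σ s).trans hσ)⟩
  rw [card_map, hs]

/-- If `f ∈ ℚ[X]` is monic and squarefree of degree `n` with (distinct) roots
`r₁, …, rₙ` in its splitting field, `1 ≤ k ≤ n`, and the `k`-subset-sum polynomial
`χ_k(f)` (which has rational coefficients) is irreducible over `ℚ`, then the Galois group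
of `f` acts transitively on the `k`-element subsets of the set of roots of `f`, i.e. it
is `k`-homogeneous. -/
theorem gal_k_homogeneous_of_subsetSumPoly_irreducible (n k : ℕ) (hk0 : 1 ≤ k)
    (hkn : k ≤ n)
    (f : ℚ[X]) (hmonic : f.Monic) (hsq : Squarefree f) (hdeg : f.natDegree = n)
    (r : Fin n → f.SplittingField) (hinj : Function.Injective r)
    (hroots : f.map (algebraMap ℚ f.SplittingField) = ∏ i : Fin n, (X - C (r i)))
    (g : ℚ[X]) (hg : g.map (algebraMap ℚ f.SplittingField) = subsetSumPoly r k)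
    (hirr : Irreducible g)
    (s t : Finset (f.rootSet f.SplittingField)) (hs : s.card = k) (ht : t.card = k) :
    ∃ φ : f.Gal,
      s.map (Polynomial.Gal.galActionHom f f.SplittingField φ).toEmbedding = t :=
  gal_k_homogeneous_of_subsetSumPoly_irreducible_general n k f r hinj hroots g hg hirr s t hs ht
end

section
/- Let α be a finite set with n ≥ 1 elements and let σ_1, …, σ_k be permutations of α. For a permutation σ, let s(σ) denote the set of all sums of sub-multisets of the partition of n given by the cycle lengths of σ (including fixed points as parts equal to 1), excluding the values 0 and n. If ⋂_{i=1}^k s(σ_i) = ∅, then for every choice of permutations τ_1, …, τ_k with each τ_i conjugate to σ_i in Perm α, the subgroup generated by τ_1, …, τ_k acts transitively on α. -/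
/-!
If `⟨τ₁, …, τ_k⟩` is not transitive, an orbit `O` of it is invariant under every `τᵢ`, hence a
union of cycles of `τᵢ`, so `|O|` is a subset sum of the cycle partition of `τᵢ`, which is that
of its conjugate `σᵢ`. As `0 < |O| < n`, it would lie in every `s(σᵢ)`.
-/

/-- The sumset `s(σ)` of a permutation `σ` of a finite set with `n` elements: the set of
all sums of sub-multisets of the partition of `n` given by the cycle lengths of `σ`
(fixed points counting as parts equal to `1`), excluding the values `0` and `n`. -/
def permSumset {α : Type*} [Fintype α] [DecidableEq α] (σ : Equiv.Perm α) : Set ℕ :=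
  {m | m ≠ 0 ∧ m ≠ Fintype.card α ∧ ∃ u ≤ (Equiv.Perm.partition σ).parts, u.sum = m}

namespace Equiv.Perm

variable {α : Type*} [Fintype α] [DecidableEq α]

theorem cycleType_subtypePerm_le (π : Perm α) {p : α → Prop} [DecidablePred p]
    (h : ∀ x, p (π x) ↔ p x) : (π.subtypePerm h).cycleType ≤ π.cycleType := by
  set ρ := ofSubtype (π.subtypePerm h)
  have hdisj : Disjoint ρ (ρ⁻¹ * π) := by
    intro x
    by_cases hx : p x
    · right
      rw [mul_apply, inv_eq_iff_eq]
      exact (ofSubtype_apply_of_mem (π.subtypePerm h) hx).symm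
    · exact .inl (ofSubtype_apply_of_not_mem _ hx)
  calc (π.subtypePerm h).cycleType = ρ.cycleType := cycleType_ofSubtype.symm
    _ ≤ ρ.cycleType + (ρ⁻¹ * π).cycleType := Multiset.le_add_right _ _
    _ = π.cycleType := by rw [← hdisj.cycleType_mul, mul_inv_cancel_left]

theorem card_fixedPoints_subtypePerm_le (π : Perm α) {p : α → Prop} [DecidablePred p]
    (h : ∀ x, p (π x) ↔ p x) :
    Fintype.card (Function.fixedPoints (π.subtypePerm h)) ≤
      Fintype.card (Function.fixedPoints π) :=
  Fintype.card_le_of_injective (fun x => ⟨x.1.1, congrArg Subtype.val x.2⟩)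
    fun _ _ hxy => by simpa [Subtype.ext_iff] using hxy

theorem parts_partition_subtypePerm_le (π : Perm α) {p : α → Prop} [DecidablePred p]
    (h : ∀ x, p (π x) ↔ p x) : (π.subtypePerm h).partition.parts ≤ π.partition.parts := by
  rw [parts_partition, parts_partition]
  refine add_le_add (cycleType_subtypePerm_le π h) ((Multiset.replicate_le_replicate 1).2 ?_)
  have := card_fixedPoints_subtypePerm_le π h
  rwa [card_fixedPoints, card_fixedPoints, sum_cycleType, sum_cycleType] at this

theorem exists_le_parts_partition_sum_eq_card (π : Perm α) {s : Set α}
    (hs : ∀ x, π x ∈ s ↔ x ∈ s) : ∃ u ≤ π.partition.parts, u.sum = Nat.card s := by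
  classical
  exact ⟨_, parts_partition_subtypePerm_le π hs, by
    rw [Nat.Partition.parts_sum, Nat.card_eq_fintype_card]⟩

end Equiv.Perm

theorem permSumset_eq_of_isConj {α : Type*} [Fintype α] [DecidableEq α] {σ τ : Equiv.Perm α}
    (h : IsConj σ τ) : permSumset σ = permSumset τ := by
  rw [permSumset, permSumset, Equiv.Perm.partition_eq_of_isConj.1 h]

open MulAction in
theorem card_orbit_mem_permSumset {α : Type*} [Fintype α] [DecidableEq α]
    {G : Subgroup (Equiv.Perm α)} {g : Equiv.Perm α} (hg : g ∈ G) {x y : α}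
    (hy : y ∉ orbit G x) : Nat.card (orbit G x) ∈ permSumset g := by
  refine ⟨?_, ?_, g.exists_le_parts_partition_sum_eq_card fun z => ?_⟩
  · exact Nat.card_ne_zero.2 ⟨⟨x, mem_orbit_self x⟩, inferInstance⟩
  · rw [← Nat.card_eq_fintype_card]
    exact (Finite.card_subtype_lt hy).ne
  · rw [← orbit_eq_iff, ← orbit_eq_iff]
    exact iff_of_eq (congrArg (· = orbit G x) (orbit_smul (⟨g, hg⟩ : G) z))

theorem invariably_transitive_of_sumsets_empty_general {α : Type*} [Fintype α] [DecidableEq α]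
    (k : ℕ) (σ : Fin k → Equiv.Perm α)
    (hempty : (⋂ i, permSumset (σ i)) = ∅)
    (τ : Fin k → Equiv.Perm α) (hconj : ∀ i, IsConj (σ i) (τ i)) (x y : α) :
    ∃ g ∈ Subgroup.closure (Set.range τ), g x = y := by
  set G := Subgroup.closure (Set.range τ)
  by_contra hy
  have hy_orbit : y ∉ MulAction.orbit G x := fun ⟨g, hg⟩ => hy ⟨g, g.2, hg⟩
  have hmem : Nat.card (MulAction.orbit G x) ∈ ⋂ i, permSumset (σ i) :=
    Set.mem_iInter.2 fun i => permSumset_eq_of_isConj (hconj i) ▸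
      card_orbit_mem_permSumset (Subgroup.subset_closure (Set.mem_range_self i)) hy_orbit
  rwa [hempty] at hmem

/-- If the sumsets of `σ₁, …, σ_k` have empty intersection, then the `σᵢ` are invariably
transitive: every family of respective conjugates `τᵢ` generates a subgroup acting
transitively. -/
theorem invariably_transitive_of_sumsets_empty {α : Type*} [Fintype α] [DecidableEq α]
    (hα : 1 ≤ Fintype.card α) (k : ℕ) (σ : Fin k → Equiv.Perm α)
    (hempty : (⋂ i, permSumset (σ i)) = ∅)
    (τ : Fin k → Equiv.Perm α) (hconj : ∀ i, IsConj (σ i) (τ i)) (x y : α) :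
    ∃ g ∈ Subgroup.closure (Set.range τ), g x = y :=
  invariably_transitive_of_sumsets_empty_general k σ hempty τ hconj x y
end
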